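/- arXiv:1610.00532 — 2 statements merged into one kernel-verified Lean document; each statement's English description precedes it below -/
import Mathlib

section
/- Let G be a finite group and A a finite set of size q ≥ 2, and let H be a subgroup of G. Then α_{[H]}(G;A) = 1 (i.e. the set of configurations whose stabilizer is conjugate to H consists of a single G-orbit) if and only if H has index 2 in G and q = 2. -/
variable {G A : Type*}

/-- The right shift action of `G` on configurations `A^G`: `(x · g) h = x (h * g⁻¹)`. -/
def shift [Group G] (x : G → A) (g : G) : G → A := fun h => x (h * g⁻¹)

/-- A transformation of the configuration space is `G`-equivariant if it commutes
with the shift action. -/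
def equivariant [Group G] (τ : (G → A) → (G → A)) : Prop :=
  ∀ (x : G → A) (g : G), τ (shift x g) = shift (τ x) g

/-- The `G`-orbit of a configuration. -/
def orbit [Group G] (x : G → A) : Set (G → A) := Set.range (shift x)

/-- The stabilizer of a configuration, as a subgroup of `G`. -/
def stab [Group G] (x : G → A) : Subgroup G where
  carrier := {g : G | shift x g = x}
  one_mem' := by
    show shift x 1 = x
    funext h
    simp [shift]
  mul_mem' := by
    intro a b ha hb
    have ha' : shift x a = x := ha
    have hb' : shift x b = x := hb
    show shift x (a * b) = x
    funext h
    show x (h * (a * b)⁻¹) = x h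
    have key : h * (a * b)⁻¹ = h * b⁻¹ * a⁻¹ := by group
    rw [key]
    have h1 := congrFun ha' (h * b⁻¹)
    have h2 := congrFun hb' h
    simp only [shift] at h1 h2
    rw [h1, h2]
  inv_mem' := by
    intro a ha
    have ha' : shift x a = x := ha
    show shift x a⁻¹ = x
    funext h
    show x (h * a⁻¹⁻¹) = x h
    rw [inv_inv]
    have h1 := congrFun ha' (h * a)
    simp only [shift] at h1
    rw [mul_inv_cancel_right] at h1
    exact h1.symm

/-- Two subgroups `H`, `K` of `G` are conjugate, namely `K = g⁻¹ * H * g` for some `g ∈ G`. -/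
def conjSub [Group G] (H K : Subgroup G) : Prop :=
  ∃ g : G, ∀ a : G, a ∈ K ↔ g * a * g⁻¹ ∈ H

/-!
For `u ≠ v`, the configuration `indicatorConfig H u v` (colour `u` on `H`, colour `v` off `H`)
has stabilizer exactly `H`. If these configurations form a single orbit, then
`indicatorConfig H v u` is a shift of `indicatorConfig H u v`, which forces `[G : H] = 2`, and a
configuration using a third colour cannot be a shift of one using only two.
Conversely, a subgroup of index 2 is normal, so a configuration whose stabilizer is conjugate
to `H` has stabilizer `H`; it is then constant on the two cosets `H` and `Hᶜ` with distinct
values, and with two colours it is `indicatorConfig H a b` or its shift `indicatorConfig H b a`.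
-/

lemma card_eq_two_iff_forall_eq_or_eq [Fintype A] {a b : A} (hab : a ≠ b) :
    Fintype.card A = 2 ↔ ∀ c, c = a ∨ c = b := by
  rw [← Nat.card_eq_fintype_card, Nat.card_eq_two_iff' a]
  constructor
  · rintro ⟨y, -, hy⟩ c
    exact or_iff_not_imp_left.2 fun hca => (hy c hca).trans (hy b hab.symm).symm
  · exact fun h => ⟨b, hab.symm, fun c hca => (h c).resolve_left hca⟩

section Configurations

variable [Group G]

@[simp]
lemma shift_apply (x : G → A) (g h : G) : shift x g h = x (h * g⁻¹) := rfl

lemma shift_shift (x : G → A) (g k : G) : shift (shift x g) k = shift x (g * k) := by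
  funext h
  simp [mul_assoc]

lemma mem_orbit_self (x : G → A) : x ∈ orbit x :=
  ⟨1, by funext h; simp⟩

lemma orbit_eq_of_mem {x y : G → A} (hxy : x ∈ orbit y) : orbit x = orbit y := by
  obtain ⟨g, rfl⟩ := hxy
  ext z
  constructor
  · rintro ⟨k, rfl⟩
    exact ⟨g * k, (shift_shift y g k).symm⟩
  · rintro ⟨k, rfl⟩
    exact ⟨g⁻¹ * k, by rw [shift_shift, mul_inv_cancel_left]⟩

lemma apply_mul_of_mem_stab {x : G → A} {g : G} (hg : g ∈ stab x) (h : G) :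
    x (h * g) = x h := by
  have hinv : shift x g⁻¹ = x := (stab x).inv_mem hg
  simpa using congrFun hinv h

lemma conjSub_refl (H : Subgroup G) : conjSub H H :=
  ⟨1, fun a => by simp⟩

lemma conjSub.eq_of_normal {H K : Subgroup G} (hKH : conjSub K H) (hH : H.Normal) : K = H := by
  obtain ⟨g, hg⟩ := hKH
  ext a
  have hga := hg (g⁻¹ * a * g)
  rw [show g * (g⁻¹ * a * g) * g⁻¹ = a by group] at hga
  rw [← hga, mul_assoc, hH.mem_comm_iff, mul_inv_cancel_right]

lemma card_orbits_eq_one_iff (P : (G → A) → Prop) {x₀ : G → A} (hx₀ : P x₀) :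
    Nat.card {O : Set (G → A) // ∃ x, O = orbit x ∧ P x} = 1 ↔
      ∀ x, P x → x ∈ orbit x₀ := by
  rw [Nat.card_eq_one_iff_unique]
  constructor
  · rintro ⟨hsub, -⟩ x hx
    have hO : orbit x = orbit x₀ :=
      congrArg Subtype.val (hsub.elim ⟨_, x, rfl, hx⟩ ⟨_, x₀, rfl, hx₀⟩)
    rw [← hO]
    exact mem_orbit_self x
  · refine fun h => ⟨⟨?_⟩, ⟨_, x₀, rfl, hx₀⟩⟩
    rintro ⟨_, x, rfl, hx⟩ ⟨_, y, rfl, hy⟩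
    exact Subtype.ext ((orbit_eq_of_mem (h x hx)).trans (orbit_eq_of_mem (h y hy)).symm)

open Classical in
noncomputable def indicatorConfig (H : Subgroup G) (u v : A) : G → A :=
  fun h => if h ∈ H then u else v

variable {H : Subgroup G} {u v : A}

lemma indicatorConfig_of_mem {h : G} (hh : h ∈ H) : indicatorConfig H u v h = u := by
  simp [indicatorConfig, hh]

lemma indicatorConfig_of_notMem {h : G} (hh : h ∉ H) : indicatorConfig H u v h = v := by
  simp [indicatorConfig, hh]

lemma indicatorConfig_eq_or (h : G) :
    indicatorConfig H u v h = u ∨ indicatorConfig H u v h = v := by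
  by_cases hh : h ∈ H
  · exact Or.inl (indicatorConfig_of_mem hh)
  · exact Or.inr (indicatorConfig_of_notMem hh)

lemma stab_indicatorConfig (huv : u ≠ v) : stab (indicatorConfig H u v) = H := by
  ext g
  constructor
  · intro hg
    by_contra hgH
    have hgg := congrFun (show shift (indicatorConfig H u v) g = _ from hg) g
    rw [shift_apply, mul_inv_cancel, indicatorConfig_of_mem H.one_mem,
      indicatorConfig_of_notMem hgH] at hgg
    exact huv hgg
  · intro hg
    show shift _ g = _
    funext h
    have hhg : h * g⁻¹ ∈ H ↔ h ∈ H := H.mul_mem_cancel_right (H.inv_mem hg)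
    rw [shift_apply]
    by_cases hh : h ∈ H
    · rw [indicatorConfig_of_mem hh, indicatorConfig_of_mem (hhg.2 hh)]
    · rw [indicatorConfig_of_notMem hh, indicatorConfig_of_notMem (mt hhg.1 hh)]

lemma index_eq_two_of_shift_indicatorConfig (huv : u ≠ v) {k : G}
    (hk : shift (indicatorConfig H u v) k = indicatorConfig H v u) : H.index = 2 := by
  refine Subgroup.index_eq_two_iff.2 ⟨k⁻¹, fun h => ?_⟩
  have hh := congrFun hk h
  by_cases h₁ : h * k⁻¹ ∈ H <;> by_cases h₂ : h ∈ H <;>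
    simp_all [indicatorConfig, eq_comm]

lemma shift_indicatorConfig_of_index_eq_two (hH : H.index = 2) {t : G} (ht : t ∉ H) :
    shift (indicatorConfig H u v) t = indicatorConfig H v u := by
  funext h
  by_cases hh : h ∈ H <;> simp [indicatorConfig, Subgroup.mul_mem_iff_of_index_two hH, hh, ht]

lemma eq_indicatorConfig_of_index_eq_two (hH : H.index = 2) {z : G → A} (hz : H ≤ stab z)
    {t : G} (ht : t ∉ H) : z = indicatorConfig H (z 1) (z t) := by
  funext h
  by_cases hh : h ∈ H
  · rw [indicatorConfig_of_mem hh]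
    simpa using apply_mul_of_mem_stab (hz hh) 1
  · have hth : t⁻¹ * h ∈ H := by simp [Subgroup.mul_mem_iff_of_index_two hH, hh, ht]
    rw [indicatorConfig_of_notMem hh, ← apply_mul_of_mem_stab (hz hth) t, mul_inv_cancel_left]

lemma exists_eq_indicatorConfig_of_index_eq_two (hH : H.index = 2) {z : G → A}
    (hz : stab z = H) : ∃ u v : A, u ≠ v ∧ z = indicatorConfig H u v := by
  obtain ⟨t, ht, -⟩ := Subgroup.index_eq_two_iff_exists_notMem_and.1 hH
  have hzH := eq_indicatorConfig_of_index_eq_two hH hz.ge ht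
  refine ⟨z 1, z t, fun h1t => ht ?_, hzH⟩
  rw [← hz]
  show shift z t = z
  rw [hzH, shift_indicatorConfig_of_index_eq_two hH ht, h1t]

end Configurations

theorem alpha_eq_one_iff_general [Group G] [Fintype A]
    (hq : 2 ≤ Fintype.card A) (H : Subgroup G) :
    Nat.card {O : Set (G → A) // ∃ x : G → A, O = orbit x ∧ conjSub (stab x) H} = 1 ↔
      H.index = 2 ∧ Fintype.card A = 2 := by
  obtain ⟨a, b, hab⟩ := Fintype.exists_pair_of_one_lt_card hq
  have hconj : ∀ {u v : A}, u ≠ v → conjSub (stab (indicatorConfig H u v)) H :=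
    fun huv => by rw [stab_indicatorConfig huv]; exact conjSub_refl H
  rw [card_orbits_eq_one_iff (fun x => conjSub (stab x) H) (hconj hab),
    card_eq_two_iff_forall_eq_or_eq hab]
  constructor
  · intro hone
    obtain ⟨k, hk⟩ := hone _ (hconj hab.symm)
    have hH := index_eq_two_of_shift_indicatorConfig hab hk
    obtain ⟨t, ht, -⟩ := Subgroup.index_eq_two_iff_exists_notMem_and.1 hH
    refine ⟨hH, fun c => or_iff_not_imp_left.2 fun hca => ?_⟩
    obtain ⟨m, hm⟩ := hone _ (hconj (Ne.symm hca))
    have hc : indicatorConfig H a b (t * m⁻¹) = c := by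
      simpa [indicatorConfig_of_notMem ht] using congrFun hm t
    exact hc ▸ (indicatorConfig_eq_or _).resolve_left (hc ▸ hca)
  · rintro ⟨hH, hA⟩ z hz
    obtain ⟨t, ht, -⟩ := Subgroup.index_eq_two_iff_exists_notMem_and.1 hH
    obtain ⟨u, v, huv, rfl⟩ := exists_eq_indicatorConfig_of_index_eq_two hH
      (hz.eq_of_normal (Subgroup.normal_of_index_eq_two hH))
    rcases hA u with rfl | rfl <;> rcases hA v with rfl | rfl
    · exact absurd rfl huv
    · exact mem_orbit_self _
    · exact ⟨t, shift_indicatorConfig_of_index_eq_two hH ht⟩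
    · exact absurd rfl huv

/-- `α_{[H]}(G;A) = 1` (the configurations whose stabilizer is
conjugate to `H` form a single `G`-orbit) iff `H` has index `2` in `G` and `|A| = 2`. -/
theorem alpha_eq_one_iff [Group G] [Fintype G] [Fintype A]
    (hq : 2 ≤ Fintype.card A) (H : Subgroup G) :
    Nat.card {O : Set (G → A) // ∃ x : G → A, O = orbit x ∧ conjSub (stab x) H} = 1 ↔
      H.index = 2 ∧ Fintype.card A = 2 :=
  alpha_eq_one_iff_general hq H
end

section
/- Let G be a finite group of order n ≥ 2, A a finite set of size q ≥ 2, and let p be the smallest prime dividing n. Then, as integers, q^n − (n−1)·q^{n/p} ≤ ac(G;A), where ac(G;A) is the number of configurations in A^G with trivial stabilizer. -/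
variable {G A : Type*}

/-! A configuration with nontrivial stabilizer is fixed by some `g ≠ 1`. The configurations
fixed by `g` are the functions on the coset space `G ⧸ ⟨g⟩`, and since the order of `g ≠ 1` is
at least the smallest prime `p` dividing `n`, there are at most `q ^ (n / p)` of them. A union
bound over the `n - 1` nontrivial elements then bounds the periodic configurations. -/

open Subgroup

section Configurations

variable [Group G]

theorem mem_stab_iff {x : G → A} {g : G} : g ∈ stab x ↔ shift x g = x := Iff.rfl

def subtypeLeStabEquiv (H : Subgroup G) : {x : G → A // H ≤ stab x} ≃ (G ⧸ H → A) where
  toFun x := Quotient.lift x.1 fun a b hab => by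
    have hmem : a⁻¹ * b ∈ stab x.1 := x.2 (QuotientGroup.leftRel_apply.mp hab)
    simpa [shift] using congrFun (mem_stab_iff.mp hmem) b
  invFun f := ⟨fun g => f g, fun a ha => funext fun g =>
    congrArg f (QuotientGroup.eq.mpr (by simpa using ha))⟩
  left_inv _ := rfl
  right_inv f := funext fun c => Quotient.inductionOn' c fun _ => rfl

theorem card_subtype_le_stab [Finite G] (H : Subgroup G) :
    Nat.card {x : G → A // H ≤ stab x} = Nat.card A ^ H.index := by
  rw [Nat.card_congr (subtypeLeStabEquiv H), Nat.card_fun, index_eq_card]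

theorem card_subtype_mem_stab [Finite G] (g : G) :
    Nat.card {x : G → A // g ∈ stab x} = Nat.card A ^ (zpowers g).index := by
  simp_rw [← zpowers_le, card_subtype_le_stab]

theorem minFac_card_le_orderOf [Finite G] {g : G} (hg : g ≠ 1) :
    (Nat.card G).minFac ≤ orderOf g := by
  refine Nat.minFac_le_of_dvd ?_ (orderOf_dvd_natCard g)
  have := (orderOf_pos g).ne'
  have := mt orderOf_eq_one_iff.mp hg
  omega

theorem index_zpowers_le [Finite G] {g : G} (hg : g ≠ 1) :
    (zpowers g).index ≤ Nat.card G / (Nat.card G).minFac := by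
  calc (zpowers g).index = Nat.card G / orderOf g := by
        rw [← index_mul_card (zpowers g), Nat.card_zpowers, Nat.mul_div_cancel _ (orderOf_pos g)]
    _ ≤ Nat.card G / (Nat.card G).minFac :=
        Nat.div_le_div_left (minFac_card_le_orderOf hg) (Nat.minFac_pos _)

theorem card_stab_ne_bot_le [Finite G] [Finite A] [Nonempty A] :
    Nat.card {x : G → A // stab x ≠ ⊥} ≤
      (Nat.card G - 1) * Nat.card A ^ (Nat.card G / (Nat.card G).minFac) := by
  classical
  have := Fintype.ofFinite G
  have hwitness (x : {x : G → A // stab x ≠ ⊥}) : ∃ g : G, g ≠ 1 ∧ g ∈ stab x.1 := by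
    obtain ⟨⟨g, hg⟩, hg1⟩ := ne_bot_iff_exists_ne_one.mp x.2
    exact ⟨g, by simpa using hg1, hg⟩
  choose g hg1 hg using hwitness
  let toSigma (x : {x : G → A // stab x ≠ ⊥}) :
      Σ g : {g : G // g ≠ 1}, {x : G → A // g.1 ∈ stab x} :=
    ⟨⟨g x, hg1 x⟩, ⟨x.1, hg x⟩⟩
  have hinj : Function.Injective toSigma := fun x y hxy => Subtype.ext (congrArg (·.2.1) hxy)
  calc Nat.card {x : G → A // stab x ≠ ⊥}
      ≤ ∑ g : {g : G // g ≠ 1}, Nat.card {x : G → A // g.1 ∈ stab x} :=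
        (Nat.card_le_card_of_injective toSigma hinj).trans_eq Nat.card_sigma
    _ ≤ ∑ _g : {g : G // g ≠ 1}, Nat.card A ^ (Nat.card G / (Nat.card G).minFac) := by
        refine Finset.sum_le_sum fun g _ => ?_
        rw [card_subtype_mem_stab]
        exact Nat.pow_le_pow_right Nat.card_pos (index_zpowers_le g.2)
    _ = (Nat.card G - 1) * Nat.card A ^ (Nat.card G / (Nat.card G).minFac) := by
        simp [Nat.card_eq_fintype_card]

theorem card_stab_eq_bot_add_card_stab_ne_bot [Finite G] [Finite A] :
    Nat.card {x : G → A // stab x = ⊥} + Nat.card {x : G → A // stab x ≠ ⊥} =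
      Nat.card A ^ Nat.card G := by
  classical
  rw [← Nat.card_sum, Nat.card_congr (Equiv.sumCompl _), Nat.card_fun]

end Configurations

theorem ac_lower_bound_general [Group G] [Fintype G] [Fintype A]
    (hq : 2 ≤ Fintype.card A) :
    (Fintype.card A : ℤ) ^ (Fintype.card G) -
        (Fintype.card G - 1) *
          (Fintype.card A : ℤ) ^ (Fintype.card G / (Fintype.card G).minFac) ≤
      (Nat.card {x : G → A // stab x = ⊥} : ℤ) := by
  have : Nonempty A := Fintype.card_pos_iff.mp (by omega)
  have hsplit := card_stab_eq_bot_add_card_stab_ne_bot (G := G) (A := A)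
  have hbound := card_stab_ne_bot_le (G := G) (A := A)
  have hG : 1 ≤ Nat.card G := Nat.card_pos
  simp only [← Nat.card_eq_fintype_card]
  zify [hG] at hsplit hbound
  linarith

/-- lower bound on aperiodic configurations: with `n = |G| ≥ 2`,
`q = |A| ≥ 2` and `p` the smallest prime dividing `n`,
`q^n − (n−1)·q^{n/p} ≤ ac(G;A)`. -/
theorem ac_lower_bound [Group G] [Fintype G] [Fintype A]
    (hn : 2 ≤ Fintype.card G) (hq : 2 ≤ Fintype.card A) :
    (Fintype.card A : ℤ) ^ (Fintype.card G) -
        (Fintype.card G - 1) *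
          (Fintype.card A : ℤ) ^ (Fintype.card G / (Fintype.card G).minFac) ≤
      (Nat.card {x : G → A // stab x = ⊥} : ℤ) :=
  ac_lower_bound_general hq
end
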